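/- If a default theory ⟨D,W⟩ under a regular semantics has extensions E₁,...,E_m = Cn(F₁),...,Cn(F_m) for formulas F_i over X, then the normal default theory with background theory ∅ and defaults { (: e_i ∧ F_i ∧ ⋀_{j≠i} ¬e_j / e_i ∧ F_i ∧ ⋀_{j≠i} ¬e_j) : 1 ≤ i ≤ m }, where e₁,...,e_m are fresh variables, has exactly the successful and closed processes [δ_i] of length one, and its extensions are in bijection with E₁,...,E_m up to var-equivalence w.r.t. X (assuming each F_i is consistent and the E_i are pairwise distinct). -/

import Mathlib

set_option linter.unusedVariables false


namespace DLogic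

/-- Propositional formulas over countably many variables. -/
inductive PForm : Type
  | var : ℕ → PForm
  | fls : PForm
  | imp : PForm → PForm → PForm
  deriving DecidableEq

namespace PForm

/-- Negation. -/
def neg (φ : PForm) : PForm := imp φ fls

/-- Truth. -/
def tru : PForm := imp fls fls

/-- Conjunction. -/
def andF (φ ψ : PForm) : PForm := neg (imp φ (neg ψ))

/-- Disjunction. -/
def orF (φ ψ : PForm) : PForm := imp (neg φ) ψ

/-- Evaluation of a formula under a valuation. -/
def eval (v : ℕ → Bool) : PForm → Bool
  | var n => v n
  | fls => false
  | imp a b => !(eval v a) || eval v b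

/-- Substitution of formulas for variables. -/
def subst (f : ℕ → PForm) : PForm → PForm
  | var n => f n
  | fls => fls
  | imp a b => imp (subst f a) (subst f b)

/-- Renaming of variables. -/
def rename (σ : ℕ → ℕ) (φ : PForm) : PForm := subst (fun n => var (σ n)) φ

/-- The variables occurring in a formula. -/
def vars : PForm → Finset ℕ
  | var n => {n}
  | fls => ∅
  | imp a b => vars a ∪ vars b

/-- The size of a formula. -/
def size : PForm → ℕ
  | var _ => 1
  | fls => 1
  | imp a b => size a + size b + 1

end PForm

/-- A propositional theory is a set of formulas. -/
abbrev Th : Type := Set PForm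

/-- A valuation is a model of a theory. -/
def Models (v : ℕ → Bool) (Γ : Th) : Prop := ∀ φ ∈ Γ, φ.eval v = true

/-- A theory is consistent if it has a model. -/
def ThConsistent (Γ : Th) : Prop := ∃ v, Models v Γ

/-- Semantic entailment. -/
def ThEntails (Γ : Th) (φ : PForm) : Prop := ∀ v, Models v Γ → φ.eval v = true

/-- Deductive closure. -/
def Cn (Γ : Th) : Th := {φ | ThEntails Γ φ}

/-- A default rule: precondition, justification, consequence. -/
structure Default : Type where
  prec : PForm
  just : PForm
  cons : PForm
  deriving DecidableEq

/-- A normal default has its justification equal to its consequence. -/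
def Default.IsNormal (d : Default) : Prop := d.just = d.cons

/-- The set of formulas of a background theory given as a list. -/
def WSet (W : List PForm) : Th := {φ | φ ∈ W}

/-- The theory consisting of `W` together with the consequences of the defaults in `Pr`. -/
def procTh (W : List PForm) (Pr : List Default) : Th :=
  {φ | φ ∈ W ∨ ∃ d ∈ Pr, d.cons = φ}

/-- `Pr` is a process of the default theory `⟨D, W⟩`: a sequence of distinct defaults of `D`
whose consequences are jointly consistent with `W`, each of whose preconditions is entailed by
`W` plus the consequences of the preceding defaults. -/
def IsProcess (D : List Default) (W : List PForm) (Pr : List Default) : Prop :=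
  Pr.Nodup ∧ (∀ d ∈ Pr, d ∈ D) ∧ ThConsistent (procTh W Pr) ∧
    ∀ i : Fin Pr.length, ThEntails (procTh W (Pr.take i.1)) (Pr.get i).prec

/-- Local (Reiter-style) successfulness: the justification of every applied default is
consistent with `W` plus the consequences of all applied defaults. -/
def LocallySuccessful (W : List PForm) (Pr : List Default) : Prop :=
  ∀ d ∈ Pr, ThConsistent (procTh W Pr ∪ {d.just})

/-- Reiter closure: no unapplied default has its precondition entailed and its justification
consistent with `W` plus the consequences. -/
def ReiterClosed (D : List Default) (W : List PForm) (Pr : List Default) : Prop :=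
  ∀ d ∈ D, d ∉ Pr →
    ¬ ThEntails (procTh W Pr) d.prec ∨ ¬ ThConsistent (procTh W Pr ∪ {d.just})

/-- Reiter extensions: deductive closures of `W` plus the consequences of a successful and
closed process. -/
def ReiterExtension (D : List Default) (W : List PForm) (E : Th) : Prop :=
  ∃ Pr, IsProcess D W Pr ∧ LocallySuccessful W Pr ∧ ReiterClosed D W Pr ∧
    E = Cn (procTh W Pr)

/-- Skeptical entailment in Reiter's default logic. -/
def ReiterSkeptical (D : List Default) (W : List PForm) (φ : PForm) : Prop :=
  ∀ E, ReiterExtension D W E → φ ∈ E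

/-- Two theories are var-equivalent w.r.t. a set of variables `X` when they entail exactly the
same formulas built only from variables in `X`. -/
def VarEquiv (X : Finset ℕ) (Γ Δ : Th) : Prop :=
  ∀ φ : PForm, φ.vars ⊆ X → (ThEntails Γ φ ↔ ThEntails Δ φ)

/-- A dummy default. -/
def dflt : Default := ⟨PForm.fls, PForm.fls, PForm.fls⟩

/-- Conjunction of a list of formulas. -/
def listConj : List PForm → PForm
  | [] => PForm.tru
  | φ :: l => φ.andF (listConj l)

/-- The size of a default. -/
def Default.size (d : Default) : ℕ := d.prec.size + d.just.size + d.cons.size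

/-- The size of a default theory. -/
def theorySize (D : List Default) (W : List PForm) : ℕ :=
  (D.map Default.size).sum + (W.map PForm.size).sum + D.length + W.length + 1

/-- The variables of a default theory. -/
def theoryVars (D : List Default) (W : List PForm) : Finset ℕ :=
  (D.map (fun d => d.prec.vars ∪ d.just.vars ∪ d.cons.vars)).foldr (· ∪ ·) ∅ ∪
    (W.map PForm.vars).foldr (· ∪ ·) ∅

/-- A strict upper bound on the variables of a default theory. -/
def varBound (D : List Default) (W : List PForm) : ℕ := (theoryVars D W).sup id + 1

end DLogic
namespace DLogic

/-- An abstract regular default-logic semantics: successfulness and closure predicates on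
sequences of defaults, with successfulness antimonotonic and the empty process successful
whenever the background theory is consistent. -/
structure RegSem : Type 1 where
  Succ : List Default → List PForm → List Default → Prop
  Closed : List Default → List PForm → List Default → Prop
  anti : ∀ D W Pr Pr', Succ D W (Pr ++ Pr') → Succ D W Pr
  empty_succ : ∀ D W, ThConsistent (WSet W) → Succ D W []

/-- A semantics is fail-safe if every successful process is a prefix of a successful and
closed process. -/
def RegSem.FailSafe (S : RegSem) : Prop :=
  ∀ D W Pr, IsProcess D W Pr → S.Succ D W Pr →
    ∃ Pr', IsProcess D W (Pr ++ Pr') ∧ S.Succ D W (Pr ++ Pr') ∧ S.Closed D W (Pr ++ Pr')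

/-- Extensions under an abstract regular semantics. -/
def RegSem.Extension (S : RegSem) (D : List Default) (W : List PForm) (E : Th) : Prop :=
  ∃ Pr, IsProcess D W Pr ∧ S.Succ D W Pr ∧ S.Closed D W Pr ∧ E = Cn (procTh W Pr)

/-- Skeptical entailment under an abstract regular semantics. -/
def RegSem.Skeptical (S : RegSem) (D : List Default) (W : List PForm) (φ : PForm) : Prop :=
  ∀ E, S.Extension D W E → φ ∈ E

end DLogic
namespace DLogic

/-! ### The simulating normal default theory `⟨D_u^F, W_u⟩`

The original theory `⟨D, W⟩` has `m = D.length` defaults and variables below `N`.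
Its regular semantics is represented by `u` consistency tests `δ j` and a circuit `C`.
In a test formula `δ j`, the variable `2*k` stands for the original variable `k` and the
variable `2*i+1` stands for the membership atom `(d_i ∈ Π)`.  In the circuit `C`, the
variable `2*j` stands for the test result `o_j` and `2*i+1` stands for `c_i`.

Fresh variables: `X₀`-copy of `k` is `N + k`; the `X_j`-copy (for test `j`) of `k` is
`N + N*(j+1) + k`; and `c i`, `e i`, `o j`, `t j` live above `N*(u+2)`. -/

namespace Sim

/-- Renaming of the original alphabet `X` to its copy `X₀`. -/
def ρ0 (N : ℕ) : ℕ → ℕ := fun k => N + k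

/-- The `X_j` copy of original variable `k`. -/
def copyV (N j k : ℕ) : ℕ := N + N * (j + 1) + k

/-- The variable `c i`. -/
def cV (N u m i : ℕ) : ℕ := N * (u + 2) + i

/-- The variable `e i`. -/
def eV (N u m i : ℕ) : ℕ := N * (u + 2) + m + i

/-- The variable `o j`. -/
def oV (N u m j : ℕ) : ℕ := N * (u + 2) + 2 * m + j

/-- The variable `t j`. -/
def tV (N u m j : ℕ) : ℕ := N * (u + 2) + 2 * m + u + j

/-- The `i`-th default of the original theory. -/
def origD (D : List Default) (i : ℕ) : Default := D.getD i dflt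

/-- Justification/consequence of the default `a i`. -/
def aFml (D : List Default) (N u i : ℕ) : PForm :=
  ((origD D i).cons.rename (ρ0 N)).andF
    ((PForm.var (cV N u D.length i)).andF (PForm.var (eV N u D.length i)))

/-- The default `a i`, simulating the application of `d i`. -/
def aDef (D : List Default) (N u i : ℕ) : Default :=
  ⟨(origD D i).prec.rename (ρ0 N), aFml D N u i, aFml D N u i⟩

/-- Justification/consequence of the default `n i`. -/
def nFml (D : List Default) (N u i : ℕ) : PForm :=
  ((PForm.var (cV N u D.length i)).neg).andF (PForm.var (eV N u D.length i))

/-- The default `n i`, simulating the non-application of `d i`. -/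
def nDef (D : List Default) (N u i : ℕ) : Default :=
  ⟨PForm.tru, nFml D N u i, nFml D N u i⟩

/-- The formula `E = e₁ ∧ ⋯ ∧ e_m`. -/
def Econj (N u m : ℕ) : PForm :=
  listConj ((List.range m).map fun i => PForm.var (eV N u m i))

/-- The formula `T = t₁ ∧ ⋯ ∧ t_u`. -/
def Tconj (N u m : ℕ) : PForm :=
  listConj ((List.range u).map fun j => PForm.var (tV N u m j))

/-- The test formula `δ j` instantiated in the simulating theory: original variables are
replaced by their `X_j`-copies and membership atoms by the variables `c i`. -/
def instδ (N u m : ℕ) (δ : ℕ → PForm) (j : ℕ) : PForm :=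
  (δ j).subst fun k =>
    if k % 2 = 0 then PForm.var (copyV N j (k / 2)) else PForm.var (cV N u m (k / 2))

/-- Justification/consequence of the default `v j`. -/
def vFml (N u m : ℕ) (δ : ℕ → PForm) (j : ℕ) : PForm :=
  (instδ N u m δ j).andF ((PForm.var (oV N u m j)).andF (PForm.var (tV N u m j)))

/-- The default `v j`, recording a positive outcome of the `j`-th consistency test. -/
def vDef (N u m : ℕ) (δ : ℕ → PForm) (j : ℕ) : Default :=
  ⟨Econj N u m, vFml N u m δ j, vFml N u m δ j⟩

/-- Justification/consequence of the default `g j`. -/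
def gFml (N u m j : ℕ) : PForm :=
  ((PForm.var (oV N u m j)).neg).andF (PForm.var (tV N u m j))

/-- The default `g j`, recording a negative outcome of the `j`-th consistency test. -/
def gDef (N u m : ℕ) (δ : ℕ → PForm) (j : ℕ) : Default :=
  ⟨(Econj N u m).andF (instδ N u m δ j).neg, gFml N u m j, gFml N u m j⟩

/-- The circuit `C` instantiated on the variables `o j` and `c i`. -/
def instC (N u m : ℕ) (C : PForm) : PForm :=
  C.subst fun k =>
    if k % 2 = 0 then PForm.var (oV N u m (k / 2)) else PForm.var (cV N u m (k / 2))

/-- Consequence of `z₁`: `W ∧ ⋀ (c i → γ i)` over the original alphabet. -/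
def z1Fml (D : List Default) (W : List PForm) (N u : ℕ) : PForm :=
  (listConj W).andF
    (listConj ((List.range D.length).map fun i =>
      (PForm.var (cV N u D.length i)).imp (origD D i).cons))

/-- The default `z₁`, outputting the simulated extension. -/
def z1Def (D : List Default) (W : List PForm) (N u : ℕ) (C : PForm) : Default :=
  ⟨((Econj N u D.length).andF (Tconj N u D.length)).andF (instC N u D.length C),
    z1Fml D W N u, z1Fml D W N u⟩

/-- The default `z₂`, outputting `F` when the simulated process is not successful and
closed. -/
def z2Def (D : List Default) (N u : ℕ) (C : PForm) (F : PForm) : Default :=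
  ⟨((Econj N u D.length).andF (Tconj N u D.length)).andF (instC N u D.length C).neg, F, F⟩

/-- The defaults `D_u^F = A ∪ N ∪ V ∪ G ∪ Z` of the simulating theory. -/
def simD (D : List Default) (W : List PForm) (N u : ℕ) (δ : ℕ → PForm) (C F : PForm) :
    List Default :=
  (List.range D.length).map (aDef D N u) ++ (List.range D.length).map (nDef D N u) ++
    (List.range u).map (vDef N u D.length δ) ++ (List.range u).map (gDef N u D.length δ) ++
    [z1Def D W N u C, z2Def D N u C F]

/-- The background theory `W_u = W[X/X₀]`. -/
def simW (W : List PForm) (N : ℕ) : List PForm := W.map (PForm.rename (ρ0 N))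

/-- `O(Π)`: the sequence of original defaults corresponding to the `A`-defaults of `Π`. -/
def Omap (D : List Default) (N u : ℕ) (Pr : List Default) : List Default :=
  Pr.filterMap fun d =>
    ((List.range D.length).find? fun i => decide (d = aDef D N u i)).map (origD D)

/-- The membership vector of a simulated process. -/
def memOf (D : List Default) (Pr : List Default) (i : ℕ) : Bool :=
  decide (i < D.length ∧ origD D i ∈ Pr)

/-- The test formula `δ j` instantiated at a membership vector, over the original alphabet. -/
def testAt (δ : ℕ → PForm) (mem : ℕ → Bool) (j : ℕ) : PForm :=
  (δ j).subst fun k =>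
    if k % 2 = 0 then PForm.var (k / 2) else cond (mem (k / 2)) PForm.tru PForm.fls

/-- The circuit `C` holds on given test results `o` and membership bits `c`. -/
def circHolds (C : PForm) (o c : ℕ → Bool) : Prop :=
  C.eval (fun k => if k % 2 = 0 then o (k / 2) else c (k / 2)) = true

open Classical in
/-- Boolean truth value of a proposition. -/
noncomputable def bOf (P : Prop) : Bool := if P then true else false

/-- The tests `δ` and the circuit `C` represent the regular semantics `S` on the theory
`⟨D, W⟩`: a process is successful and closed iff `C` evaluates to true when each `o j` is the
consistency of the instantiated `j`-th test and each `c i` is the membership bit of `d i`. -/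
def Represents (S : RegSem) (D : List Default) (W : List PForm) (u : ℕ) (δ : ℕ → PForm)
    (C : PForm) : Prop :=
  ∀ Pr, IsProcess D W Pr →
    ((S.Succ D W Pr ∧ S.Closed D W Pr) ↔
      circHolds C (fun j => bOf (ThConsistent {testAt δ (memOf D Pr) j})) (memOf D Pr))

/-- All variables of the original theory are below `N`. -/
def VarsBelow (D : List Default) (W : List PForm) (N : ℕ) : Prop :=
  (∀ d ∈ D, ∀ k ∈ d.prec.vars ∪ d.just.vars ∪ d.cons.vars, k < N) ∧
    ∀ φ ∈ W, ∀ k ∈ φ.vars, k < N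

/-- The variables of the tests and of the circuit are in range. -/
def TestVarsOK (m N u : ℕ) (δ : ℕ → PForm) (C : PForm) : Prop :=
  (∀ j < u, ∀ k ∈ (δ j).vars, (k % 2 = 0 → k / 2 < N) ∧ (k % 2 = 1 → k / 2 < m)) ∧
    ∀ k ∈ C.vars, (k % 2 = 0 → k / 2 < u) ∧ (k % 2 = 1 → k / 2 < m)

end Sim

end DLogic
namespace DLogic

/-! ### Complexity-theoretic notions -/

/-- `f : ℕ → ℕ` is computable in polynomial time (by a two-stack Turing machine, with the
standard binary encoding of natural numbers). -/
def PolyTime (f : ℕ → ℕ) : Prop :=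
  Nonempty
    (Turing.TM2ComputableInPolyTime Computability.encodingNatBool.encode
      Computability.encodingNatBool.encode f)

/-- The class P of polynomial-time decidable languages. -/
def InP (L : Set ℕ) : Prop := ∃ f, PolyTime f ∧ ∀ x, x ∈ L ↔ f x = 1

/-- The levels `Σₖᵖ` of the polynomial hierarchy. -/
def SigmaP : ℕ → Set ℕ → Prop
  | 0, L => InP L
  | (k + 1), L =>
      ∃ (p : Polynomial ℕ) (M : Set ℕ), SigmaP k Mᶜ ∧
        ∀ x, x ∈ L ↔ ∃ y, Nat.size y ≤ p.eval (Nat.size x) ∧ Nat.pair x y ∈ M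

/-- The levels `Πₖᵖ` of the polynomial hierarchy. -/
def PiP (k : ℕ) (L : Set ℕ) : Prop := SigmaP k Lᶜ

/-- The class `Dᵖ`: intersections of an NP language and a coNP language. -/
def InDP (L : Set ℕ) : Prop :=
  ∃ L₁ L₂ : Set ℕ, SigmaP 1 L₁ ∧ PiP 1 L₂ ∧ L = L₁ ∩ L₂

open Classical in
/-- Iterated computation with access to an oracle `A`: in each round the step function
receives the current state paired with the oracle's answer on the current state. -/
noncomputable def oracleIter (step : ℕ → ℕ) (A : Set ℕ) : ℕ → ℕ → ℕ
  | 0, s => s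
  | (k + 1), s => oracleIter step A k (step (Nat.pair s (if s ∈ A then 1 else 0)))

/-- The class `Δ₂ᵖ = Pᴺᴾ`: languages decidable by a polynomial-time machine making
polynomially many calls to an NP oracle. -/
def InDelta2 (L : Set ℕ) : Prop :=
  ∃ A : Set ℕ, SigmaP 1 A ∧ ∃ (p : Polynomial ℕ) (step : ℕ → ℕ), PolyTime step ∧
    (∀ x k, k ≤ p.eval (Nat.size x) →
      Nat.size (oracleIter step A k x) ≤ p.eval (Nat.size x)) ∧
    ∀ x, x ∈ L ↔ (oracleIter step A (p.eval (Nat.size x)) x) % 2 = 1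

/-- Functions computable in polynomial time with an NP oracle. -/
def DeltaTwoFun (f : ℕ → ℕ) : Prop :=
  ∃ A : Set ℕ, SigmaP 1 A ∧ ∃ (p : Polynomial ℕ) (step : ℕ → ℕ), PolyTime step ∧
    (∀ x k, k ≤ p.eval (Nat.size x) →
      Nat.size (oracleIter step A k x) ≤ p.eval (Nat.size x)) ∧
    ∀ x, f x = oracleIter step A (p.eval (Nat.size x)) x

/-- Polynomial-time many-one reducibility. -/
def PolyReducible (L M : Set ℕ) : Prop := ∃ f, PolyTime f ∧ ∀ x, x ∈ L ↔ f x ∈ M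

/-- Encoding of formulas as natural numbers. -/
def PForm.enc : PForm → ℕ
  | .var n => Nat.pair 0 n
  | .fls => Nat.pair 1 0
  | .imp a b => Nat.pair 2 (Nat.pair a.enc b.enc)

/-- Encoding of defaults as natural numbers. -/
def Default.enc (d : Default) : ℕ :=
  Nat.pair d.prec.enc (Nat.pair d.just.enc d.cons.enc)

/-- Encoding of lists as natural numbers. -/
def encList {α : Type} (f : α → ℕ) : List α → ℕ
  | [] => 0
  | x :: l => Nat.pair (f x) (encList f l) + 1

/-- Encoding of default theories. -/
def encTheory (D : List Default) (W : List PForm) : ℕ :=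
  Nat.pair (encList Default.enc D) (encList PForm.enc W)

/-- Encoding of a default theory together with a query variable. -/
def encInstance (D : List Default) (W : List PForm) (a : ℕ) : ℕ :=
  Nat.pair (encTheory D W) a

/-- Encoding of a default theory together with a sequence of defaults. -/
def encTriple (D : List Default) (W : List PForm) (Pr : List Default) : ℕ :=
  Nat.pair (encTheory D W) (encList Default.enc Pr)

/-- A binary function of polynomial size (in the size of its first argument plus its second
argument). -/
def PolysizeFun2 (g : ℕ → ℕ → ℕ) : Prop :=
  ∃ p : Polynomial ℕ, ∀ x n, Nat.size (g x n) ≤ p.eval (Nat.size x + n)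

/-- Non-uniform compilability class `nu-comp-C` for problems of pairs (fixed part, varying
part): the fixed part may be preprocessed, knowing the size of the varying part, into a
polynomial-size data structure after which the problem is in `C`. -/
def InNuComp (C : Set ℕ → Prop) (L : Set (ℕ × ℕ)) : Prop :=
  ∃ g : ℕ → ℕ → ℕ, PolysizeFun2 g ∧ ∃ M : Set ℕ, C M ∧
    ∀ x y, ((x, y) ∈ L ↔ Nat.pair (g x (Nat.size y)) y ∈ M)

/-- Non-uniform compilability (nu-comp) reductions. -/
def NuCompReducible (A B : Set (ℕ × ℕ)) : Prop :=
  ∃ f₁ f₂ : ℕ → ℕ → ℕ, ∃ g : ℕ → ℕ,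
    PolysizeFun2 f₁ ∧ PolysizeFun2 f₂ ∧ PolyTime g ∧
    ∀ x y, ((x, y) ∈ A ↔ (f₁ x (Nat.size y), g (Nat.pair (f₂ x (Nat.size y)) y)) ∈ B)

/-- The polynomial hierarchy collapses. -/
def PHCollapses : Prop := ∃ k, ∀ L : Set ℕ, SigmaP (k + 1) L → SigmaP k L

end DLogic
namespace DLogic

/-- The formula `e_i ∧ F_i ∧ ⋀_{j ≠ i} ¬e_j`. -/
def s10Fml (F : ℕ → PForm) (e : ℕ → ℕ) (m i : ℕ) : PForm :=
  (PForm.var (e i)).andF ((F i).andF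
    (listConj (((List.range m).filter fun j => j ≠ i).map fun j => (PForm.var (e j)).neg)))

/-- The normal default `(: e_i ∧ F_i ∧ ⋀_{j≠i} ¬e_j / e_i ∧ F_i ∧ ⋀_{j≠i} ¬e_j)`. -/
def s10Def (F : ℕ → PForm) (e : ℕ → ℕ) (m i : ℕ) : Default :=
  ⟨PForm.tru, s10Fml F e m i, s10Fml F e m i⟩

/-- One default per extension of the original theory. -/
def s10D (F : ℕ → PForm) (e : ℕ → ℕ) (m : ℕ) : List Default :=
  (List.range m).map (s10Def F e m)


section S10Aux

open Classical

lemma eval_neg (v : ℕ → Bool) (φ : PForm) : (φ.neg).eval v = !φ.eval v := by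
  simp [PForm.neg, PForm.eval]

lemma eval_tru (v : ℕ → Bool) : PForm.tru.eval v = true := by
  simp [PForm.tru, PForm.eval]

lemma eval_andF (v : ℕ → Bool) (a b : PForm) :
    (a.andF b).eval v = (a.eval v && b.eval v) := by
  simp [PForm.andF, PForm.neg, PForm.eval]

lemma eval_listConj (v : ℕ → Bool) (L : List PForm) :
    (listConj L).eval v = true ↔ ∀ φ ∈ L, φ.eval v = true := by
  induction L with
  | nil => simp [listConj, eval_tru]
  | cons a l ih => simp [listConj, eval_andF, ih]

lemma eval_congr {v w : ℕ → Bool} (φ : PForm) (h : ∀ k ∈ φ.vars, v k = w k) :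
    φ.eval v = φ.eval w := by
  induction φ with
  | var n => exact h n (by simp [PForm.vars])
  | fls => rfl
  | imp a b iha ihb =>
      simp only [PForm.eval]
      rw [iha (fun k hk => h k (by simp [PForm.vars, hk])),
        ihb (fun k hk => h k (by simp [PForm.vars, hk]))]

lemma eval_s10Fml (F : ℕ → PForm) (e : ℕ → ℕ) (m i : ℕ) (v : ℕ → Bool) :
    (s10Fml F e m i).eval v = true ↔
      v (e i) = true ∧ (F i).eval v = true ∧ ∀ j < m, j ≠ i → v (e j) = false := by
  rw [s10Fml, eval_andF, eval_andF, Bool.and_eq_true, Bool.and_eq_true,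
    eval_listConj]
  simp only [List.mem_map, List.mem_filter, List.mem_range, decide_eq_true_eq,
    forall_exists_index, and_imp]
  constructor
  · rintro ⟨h1, h2, h3⟩
    refine ⟨h1, h2, fun j hj hji => ?_⟩
    have := h3 ((PForm.var (e j)).neg) j hj hji rfl
    simpa [eval_neg, PForm.eval] using this
  · rintro ⟨h1, h2, h3⟩
    refine ⟨h1, h2, ?_⟩
    rintro φ j hj hji rfl
    simp [eval_neg, PForm.eval, h3 j hj hji]

lemma models_singleton (v : ℕ → Bool) (ψ : PForm) :
    Models v ({ψ} : Th) ↔ ψ.eval v = true := by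
  constructor
  · intro h; exact h ψ rfl
  · intro h φ hφ; rw [Set.mem_singleton_iff] at hφ; subst hφ; exact h

lemma models_union_singleton (v : ℕ → Bool) (Γ : Th) (ψ : PForm) :
    Models v (Γ ∪ {ψ}) ↔ Models v Γ ∧ ψ.eval v = true := by
  constructor
  · intro h; exact ⟨fun φ hφ => h φ (Or.inl hφ), h ψ (Or.inr rfl)⟩
  · rintro ⟨h1, h2⟩ φ (hφ | hφ)
    · exact h1 φ hφ
    · rw [Set.mem_singleton_iff] at hφ; subst hφ; exact h2

lemma models_procTh (v : ℕ → Bool) (Pr : List Default) :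
    Models v (procTh [] Pr) ↔ ∀ d ∈ Pr, d.cons.eval v = true := by
  constructor
  · intro h d hd; exact h _ (Or.inr ⟨d, hd, rfl⟩)
  · rintro h φ (hφ | ⟨d, hd, rfl⟩)
    · simp at hφ
    · exact h d hd

lemma models_Cn (v : ℕ → Bool) (Γ : Th) : Models v (Cn Γ) ↔ Models v Γ :=
  ⟨fun h φ hφ => h φ (fun w hw => hw φ hφ), fun h φ hφ => hφ v h⟩

lemma entails_Cn (Γ : Th) (φ : PForm) : ThEntails (Cn Γ) φ ↔ ThEntails Γ φ := by
  constructor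
  · intro h v hv; exact h v ((models_Cn v Γ).mpr hv)
  · intro h v hv; exact h v ((models_Cn v Γ).mp hv)

lemma s10Fml_inj {F : ℕ → PForm} {e : ℕ → ℕ} {m i j : ℕ}
    (h : s10Fml F e m i = s10Fml F e m j) : e i = e j := by
  simp only [s10Fml, PForm.andF, PForm.neg, PForm.imp.injEq, PForm.var.injEq] at h
  exact h.1.1

/-- The adjusted valuation making `s10Fml i` true. -/
noncomputable def adjV (e : ℕ → ℕ) (m i : ℕ) (v : ℕ → Bool) : ℕ → Bool :=
  fun k => if k = e i then true
    else if ∃ j, j < m ∧ j ≠ i ∧ k = e j then false else v k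

lemma adjV_eq_of_mem_X {X : Finset ℕ} {e : ℕ → ℕ} {m i : ℕ}
    (he : ∀ i < m, e i ∉ X) (hi : i < m) (v : ℕ → Bool) {k : ℕ} (hk : k ∈ X) :
    adjV e m i v k = v k := by
  unfold adjV
  rw [if_neg, if_neg]
  · rintro ⟨j, hj, _, rfl⟩; exact he j hj hk
  · rintro rfl; exact he i hi hk

lemma eval_s10Fml_adjV {F : ℕ → PForm} {X : Finset ℕ} {e : ℕ → ℕ} {m i : ℕ}
    (hFv : ∀ i < m, (F i).vars ⊆ X) (he : ∀ i < m, e i ∉ X)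
    (heInj : ∀ i < m, ∀ j < m, e i = e j → i = j) (hi : i < m)
    (v : ℕ → Bool) (hv : (F i).eval v = true) :
    (s10Fml F e m i).eval (adjV e m i v) = true := by
  rw [eval_s10Fml]
  refine ⟨by unfold adjV; rw [if_pos rfl], ?_, ?_⟩
  · rw [eval_congr (F i) (fun k hk => adjV_eq_of_mem_X he hi v (hFv i hi hk))]
    exact hv
  · intro j hj hji
    unfold adjV
    rw [if_neg, if_pos ⟨j, hj, hji, rfl⟩]
    intro hee; exact hji (heInj j hj i hi hee)

lemma s10Fml_consistent {F : ℕ → PForm} {X : Finset ℕ} {e : ℕ → ℕ} {m i : ℕ}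
    (hFv : ∀ i < m, (F i).vars ⊆ X) (hcons : ∀ i < m, ThConsistent {F i})
    (he : ∀ i < m, e i ∉ X) (heInj : ∀ i < m, ∀ j < m, e i = e j → i = j) (hi : i < m) :
    ∃ v, (s10Fml F e m i).eval v = true := by
  obtain ⟨v, hv⟩ := hcons i hi
  exact ⟨adjV e m i v, eval_s10Fml_adjV hFv he heInj hi v ((models_singleton v _).mp hv)⟩

lemma s10Fml_clash {F : ℕ → PForm} {e : ℕ → ℕ} {m i j : ℕ}
    (hi : i < m) (hj : j < m) (hij : i ≠ j) (v : ℕ → Bool)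
    (h1 : (s10Fml F e m i).eval v = true) (h2 : (s10Fml F e m j).eval v = true) : False := by
  rw [eval_s10Fml] at h1 h2
  have := h1.2.2 j hj (Ne.symm hij)
  rw [h2.1] at this
  exact Bool.true_eq_false.mp this

lemma mem_s10D {F : ℕ → PForm} {e : ℕ → ℕ} {m : ℕ} {d : Default} :
    d ∈ s10D F e m ↔ ∃ i < m, d = s10Def F e m i := by
  simp [s10D, eq_comm]

lemma procTh_single (F : ℕ → PForm) (e : ℕ → ℕ) (m i : ℕ) :
    procTh [] [s10Def F e m i] = ({s10Fml F e m i} : Th) := by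
  ext φ
  simp [procTh, s10Def, eq_comm]

lemma s10_key {F : ℕ → PForm} {X : Finset ℕ} {e : ℕ → ℕ} {m i : ℕ}
    (hFv : ∀ i < m, (F i).vars ⊆ X) (he : ∀ i < m, e i ∉ X)
    (heInj : ∀ i < m, ∀ j < m, e i = e j → i = j) (hi : i < m)
    (φ : PForm) (hφ : φ.vars ⊆ X) :
    ThEntails {s10Fml F e m i} φ ↔ ThEntails {F i} φ := by
  constructor
  · intro h v hv
    have hFi : (F i).eval v = true := (models_singleton v _).mp hv
    have := h (adjV e m i v)
      ((models_singleton _ _).mpr (eval_s10Fml_adjV hFv he heInj hi v hFi))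
    rw [← eval_congr φ (fun k hk => adjV_eq_of_mem_X he hi v (hφ hk))]
    exact this
  · intro h v hv
    have hfml := (models_singleton v _).mp hv
    rw [eval_s10Fml] at hfml
    exact h v ((models_singleton v _).mpr hfml.2.1)

end S10Aux

/-- if `⟨D, W⟩` under a regular semantics has extensions `Cn(F₁), …, Cn(F_m)`
(`F_i` consistent formulas over `X`, pairwise distinct extensions), then the normal default
theory with empty background theory and defaults `(: e_i ∧ F_i ∧ ⋀_{j≠i}¬e_j / …)` (with
`e₁, …, e_m` fresh variables) has exactly the successful and closed processes `[δ_i]` of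
length one, and its extensions are in bijection with the `Cn(F_i)` up to var-equivalence
w.r.t. `X`. -/
theorem exponential_faithful_translation (S : RegSem) (D : List Default) (W : List PForm)
    (m : ℕ) (hm : 0 < m) (F : ℕ → PForm) (X : Finset ℕ) (e : ℕ → ℕ)
    (hFv : ∀ i < m, (F i).vars ⊆ X)
    (hcons : ∀ i < m, ThConsistent {F i})
    (hdist : ∀ i < m, ∀ j < m, i ≠ j → Cn {F i} ≠ Cn {F j})
    (he : ∀ i < m, e i ∉ X)
    (heInj : ∀ i < m, ∀ j < m, e i = e j → i = j)
    (hext : ∀ E : Th, S.Extension D W E ↔ ∃ i < m, E = Cn {F i}) :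
    (∀ Pr : List Default,
      (IsProcess (s10D F e m) [] Pr ∧ LocallySuccessful [] Pr ∧
        ReiterClosed (s10D F e m) [] Pr) ↔ ∃ i < m, Pr = [s10Def F e m i]) ∧
    (∀ i < m, ∃ E' : Th, ReiterExtension (s10D F e m) [] E' ∧ VarEquiv X E' (Cn {F i})) ∧
    (∀ E' : Th, ReiterExtension (s10D F e m) [] E' → ∃ i < m, VarEquiv X E' (Cn {F i})) ∧
    ∀ i < m, ∀ j < m, i ≠ j →
      ¬ VarEquiv X (Cn {s10Fml F e m i}) (Cn {s10Fml F e m j}) := by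
  have hA : ∀ Pr : List Default,
      (IsProcess (s10D F e m) [] Pr ∧ LocallySuccessful [] Pr ∧
        ReiterClosed (s10D F e m) [] Pr) ↔ ∃ i < m, Pr = [s10Def F e m i] := by
    intro Pr
    constructor
    · rintro ⟨⟨hnd, hmem, hcons', hpre⟩, hsucc, hclosed⟩
      cases Pr with
      | nil =>
        exfalso
        have hd0 : s10Def F e m 0 ∈ s10D F e m := mem_s10D.mpr ⟨0, hm, rfl⟩
        rcases hclosed _ hd0 (by simp) with h | h
        · exact h (fun v _ => eval_tru v)
        · obtain ⟨v, hv⟩ := s10Fml_consistent hFv hcons he heInj hm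
          exact h ⟨v, (models_union_singleton v _ _).mpr
            ⟨(models_procTh v []).mpr (by simp), hv⟩⟩
      | cons d l =>
        cases l with
        | nil =>
          obtain ⟨i, hi, hd⟩ := mem_s10D.mp (hmem d (by simp))
          exact ⟨i, hi, by rw [hd]⟩
        | cons d2 t =>
          exfalso
          obtain ⟨i, hi, hd1⟩ := mem_s10D.mp (hmem d (by simp))
          obtain ⟨j, hj, hd2⟩ := mem_s10D.mp (hmem d2 (by simp))
          have hne : d ≠ d2 := by
            intro h; rw [h] at hnd
            exact (List.nodup_cons.mp hnd).1 (by simp)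
          have hij : i ≠ j := by
            rintro rfl; exact hne (hd1.trans hd2.symm)
          obtain ⟨v, hv⟩ := hcons'
          have h1 := (models_procTh v _).mp hv d (by simp)
          have h2 := (models_procTh v _).mp hv d2 (by simp)
          rw [hd1] at h1; rw [hd2] at h2
          exact s10Fml_clash hi hj hij v h1 h2
    · rintro ⟨i, hi, rfl⟩
      obtain ⟨v, hv⟩ := s10Fml_consistent hFv hcons he heInj hi
      have hmod : Models v (procTh [] [s10Def F e m i]) := by
        refine (models_procTh v _).mpr ?_
        intro d hd; rw [List.mem_singleton] at hd; subst hd; exact hv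
      refine ⟨⟨List.nodup_singleton _, ?_, ⟨v, hmod⟩, ?_⟩, ?_, ?_⟩
      · intro d hd; rw [List.mem_singleton] at hd; subst hd
        exact mem_s10D.mpr ⟨i, hi, rfl⟩
      · rintro ⟨k, hk⟩ w hw
        simp only [List.length_singleton] at hk
        interval_cases k
        exact eval_tru w
      · intro d hd; rw [List.mem_singleton] at hd; subst hd
        exact ⟨v, (models_union_singleton v _ _).mpr ⟨hmod, hv⟩⟩
      · intro d hd hnm
        obtain ⟨j, hj, rfl⟩ := mem_s10D.mp hd
        have hij : j ≠ i := by rintro rfl; exact hnm (by simp)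
        right
        rintro ⟨w, hw⟩
        rw [models_union_singleton] at hw
        have h1 := (models_procTh w _).mp hw.1 _ (List.mem_singleton.mpr rfl)
        exact s10Fml_clash hj hi hij w hw.2 h1
  refine ⟨hA, ?_, ?_, ?_⟩
  · intro i hi
    obtain ⟨hproc, hsucc, hclosed⟩ := (hA [s10Def F e m i]).mpr ⟨i, hi, rfl⟩
    refine ⟨Cn (procTh [] [s10Def F e m i]), ⟨_, hproc, hsucc, hclosed, rfl⟩, ?_⟩
    intro φ hφ
    rw [entails_Cn, entails_Cn, procTh_single]
    exact s10_key hFv he heInj hi φ hφ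
  · rintro E' ⟨Pr, hproc, hsucc, hclosed, rfl⟩
    obtain ⟨i, hi, rfl⟩ := (hA Pr).mp ⟨hproc, hsucc, hclosed⟩
    refine ⟨i, hi, ?_⟩
    intro φ hφ
    rw [entails_Cn, entails_Cn, procTh_single]
    exact s10_key hFv he heInj hi φ hφ
  · intro i hi j hj hij hveq
    have hij' : ∀ φ : PForm, φ.vars ⊆ X → (ThEntails {F i} φ ↔ ThEntails {F j} φ) := by
      intro φ hφ
      rw [← s10_key hFv he heInj hi φ hφ, ← s10_key hFv he heInj hj φ hφ,
        ← entails_Cn {s10Fml F e m i}, ← entails_Cn {s10Fml F e m j}]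
      exact hveq φ hφ
    have h1 : ThEntails {F i} (F j) :=
      (hij' (F j) (hFv j hj)).mpr (fun v hv => (models_singleton v _).mp hv)
    have h2 : ThEntails {F j} (F i) :=
      (hij' (F i) (hFv i hi)).mp (fun v hv => (models_singleton v _).mp hv)
    apply hdist i hi j hj hij
    ext φ
    constructor
    · intro h v hv
      exact h v ((models_singleton v _).mpr (h2 v hv))
    · intro h v hv
      exact h v ((models_singleton v _).mpr (h1 v hv))

end DLogic
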